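/- arXiv:2211.14666 — 3 statements merged into one kernel-verified Lean document; each statement's English description precedes it below -/
import Mathlib

section
/- Let P be a Borel probability measure on ℝ^{k×m} with topological support 𝒲. The following are equivalent: (i) there exist W^(1),…,W^(m) ∈ 𝒲 and indices i_1,…,i_m ∈ {1,…,k} such that the rows W^(1)_{i_1,:},…,W^(m)_{i_m,:} are linearly independent; (ii) for every Borel set E₀ ⊆ ℝ^{k×m} with P(E₀) = 0, there exist W^(1),…,W^(m) ∈ 𝒲 \ E₀ and indices i_1,…,i_m ∈ {1,…,k} such that the rows W^(1)_{i_1,:},…,W^(m)_{i_m,:} are linearly independent. -/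
open MeasureTheory

/-- Matrices over `ℝ` carry the Borel σ-algebra of their (product) topology. -/
noncomputable instance matrixMeasurableSpace {k m : ℕ} :
    MeasurableSpace (Matrix (Fin k) (Fin m) ℝ) := borel _

instance matrixBorelSpace {k m : ℕ} : BorelSpace (Matrix (Fin k) (Fin m) ℝ) := ⟨rfl⟩

/-- The topological support of a measure: the points all of whose open neighbourhoods
have positive measure. -/
def msupport {α : Type*} [TopologicalSpace α] [MeasurableSpace α] (P : Measure α) : Set α :=
  {x | ∀ U : Set α, IsOpen U → x ∈ U → 0 < P U}

open Set Topology

/- Linear independence of finitely many vectors is an open condition, so it survives moving each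
`W⁽ᵗ⁾` slightly. In a second countable space the complement of the support is null, so the support
minus a null set is still dense in the support, and the perturbed matrices can be taken there. -/

instance Matrix.instSecondCountableTopology {ι κ R : Type*} [Countable ι] [Countable κ]
    [TopologicalSpace R] [SecondCountableTopology R] :
    SecondCountableTopology (Matrix ι κ R) :=
  inferInstanceAs (SecondCountableTopology (ι → κ → R))

lemma msupport_eq_support {α : Type*} [TopologicalSpace α] [MeasurableSpace α]
    (μ : Measure α) : msupport μ = μ.support := by
  ext x
  simp only [msupport, Measure.support_eq_forall_isOpen, mem_ofPred_eq]
  exact forall_congr' fun U => forall_comm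

lemma MeasureTheory.Measure.support_subset_closure_support_diff {α : Type*} [TopologicalSpace α]
    [HereditarilyLindelofSpace α] [MeasurableSpace α] {μ : Measure α} {N : Set α}
    (hN : μ N = 0) : μ.support ⊆ closure (μ.support \ N) := by
  intro x hx
  rw [mem_closure_iff]
  intro U hU hxU
  have hconull : μ (μ.support \ N)ᶜ = 0 := by
    rw [compl_sdiff]
    exact measure_union_null hN Measure.measure_compl_support
  refine nonempty_of_measure_ne_zero (μ := μ) ?_
  rw [measure_inter_conull hconull]
  exact ((Measure.mem_support_iff_forall x).1 hx U (hU.mem_nhds hxU)).ne'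

theorem sufficient_task_variability_ae_general {k m : ℕ}
    (P : Measure (Matrix (Fin k) (Fin m) ℝ)) :
    (∃ (Ws : Fin m → Matrix (Fin k) (Fin m) ℝ) (idx : Fin m → Fin k),
        (∀ t, Ws t ∈ msupport P) ∧
        LinearIndependent ℝ fun t => Ws t (idx t)) ↔
    (∀ E₀ : Set (Matrix (Fin k) (Fin m) ℝ), MeasurableSet E₀ → P E₀ = 0 →
      ∃ (Ws : Fin m → Matrix (Fin k) (Fin m) ℝ) (idx : Fin m → Fin k),
        (∀ t, Ws t ∈ msupport P \ E₀) ∧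
        LinearIndependent ℝ fun t => Ws t (idx t)) := by
  rw [msupport_eq_support]
  constructor
  · rintro ⟨Ws, idx, hmem, hli⟩ E₀ - hE₀
    have hopen : IsOpen {W' : Fin m → Matrix (Fin k) (Fin m) ℝ |
        LinearIndependent ℝ fun t => W' t (idx t)} :=
      isOpen_setOfPred_linearIndependent.preimage (by fun_prop)
    have hclosure : Ws ∈ closure (univ.pi fun _ => P.support \ E₀) := by
      rw [closure_pi_set]
      exact fun t _ => Measure.support_subset_closure_support_diff hE₀ (hmem t)
    obtain ⟨W', hW'li, hW'mem⟩ := mem_closure_iff.1 hclosure _ hopen hli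
    exact ⟨W', idx, fun t => hW'mem t (mem_univ t), hW'li⟩
  · intro h
    obtain ⟨Ws, idx, hmem, hli⟩ := h ∅ MeasurableSet.empty measure_empty
    exact ⟨Ws, idx, fun t => (hmem t).1, hli⟩

/-- **Sufficient task variability is automatically robust to null sets.**
For a Borel probability measure `P` on `ℝ^{k×m}` with topological support `𝒲`, the
following are equivalent: (i) there are `W⁽¹⁾,…,W⁽ᵐ⁾ ∈ 𝒲` and row indices
`i₁,…,iₘ` such that the rows `W⁽¹⁾_{i₁,:},…,W⁽ᵐ⁾_{iₘ,:}` are linearly independent;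
(ii) for every Borel set `E₀` with `P E₀ = 0`, such matrices can be found in `𝒲 \ E₀`. -/
theorem sufficient_task_variability_ae {k m : ℕ}
    (P : Measure (Matrix (Fin k) (Fin m) ℝ)) [IsProbabilityMeasure P] :
    (∃ (Ws : Fin m → Matrix (Fin k) (Fin m) ℝ) (idx : Fin m → Fin k),
        (∀ t, Ws t ∈ msupport P) ∧
        LinearIndependent ℝ fun t => Ws t (idx t)) ↔
    (∀ E₀ : Set (Matrix (Fin k) (Fin m) ℝ), MeasurableSet E₀ → P E₀ = 0 →
      ∃ (Ws : Fin m → Matrix (Fin k) (Fin m) ℝ) (idx : Fin m → Fin k),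
        (∀ t, Ws t ∈ msupport P \ E₀) ∧
        LinearIndependent ℝ fun t => Ws t (idx t)) :=
  sufficient_task_variability_ae_general P
end

section
/- (Linear identifiability.) Let X be a nonempty set, let f, f̂ : X → ℝ^m, let P be a Borel probability measure on ℝ^{k×m} with topological support 𝒲, let Ŵ : 𝒲 → ℝ^{k×m}, and let η ↦ ν_η (η ∈ ℝ^k) be a KL-identifiable family of probability measures. Suppose that for P-almost every W ∈ 𝒲 and every x ∈ X, klDiv(ν_{Ŵ(W) f̂(x)}, ν_{W f(x)}) = 0. Assume (A4): there exist x^(1),…,x^(m) ∈ X such that the matrix [f(x^(1)) ⋯ f(x^(m))] ∈ ℝ^{m×m} is invertible; and (A5): there exist W^(1),…,W^(m) ∈ 𝒲 and indices i_1,…,i_m ∈ {1,…,k} such that the rows W^(1)_{i_1,:},…,W^(m)_{i_m,:} are linearly independent. Then there exists an invertible matrix L ∈ ℝ^{m×m} such that f(x) = L f̂(x) for all x ∈ X, and Ŵ(W) = W L for P-almost every W. -/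
open MeasureTheory
open scoped ENNReal

/-!
The perfect fit and KL-identifiability give `Ŵ(W) f̂(x) = W f(x)` for a.e. `W`. Since
`W ↦ (W v)_i` is continuous, an a.e. identity between such functions holds on the whole
support of `P`, so by (A5) an identity `W u = W v` for a.e. `W` forces `u = v`. Collecting
the points of (A4) into matrices `F`, `F̂` gives `Ŵ(W) F̂ = W F` a.e.; this cancellation
shows that `F̂` is invertible, and `L = F F̂⁻¹` does the job.
-/

open Matrix

theorem apply_eq_of_mem_msupport {α β : Type*} [TopologicalSpace α] [MeasurableSpace α]
    [TopologicalSpace β] [T2Space β] {P : Measure α} {g h : α → β}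
    (hg : Continuous g) (hh : Continuous h) (hgh : g =ᵐ[P] h) {w : α}
    (hw : w ∈ msupport P) : g w = h w := by
  by_contra hne
  exact (hw _ (isClosed_eq hg hh).isOpen_compl hne).ne' (ae_iff.mp hgh)

theorem eq_of_ae_mulVec_eq {k m : ℕ} {P : Measure (Matrix (Fin k) (Fin m) ℝ)}
    {Ws : Fin m → Matrix (Fin k) (Fin m) ℝ} {idx : Fin m → Fin k}
    (hWs : ∀ t, Ws t ∈ msupport P) (hli : LinearIndependent ℝ fun t => Ws t (idx t))
    {u v : Fin m → ℝ} (huv : ∀ᵐ W ∂P, W *ᵥ u = W *ᵥ v) : u = v := by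
  have hB : IsUnit (of fun t => Ws t (idx t)) := linearIndependent_rows_iff_isUnit.mp hli
  refine mulVec_injective_iff_isUnit.mpr hB (funext fun t => ?_)
  exact apply_eq_of_mem_msupport (g := fun W => (W *ᵥ u) (idx t))
    (h := fun W => (W *ᵥ v) (idx t)) (by fun_prop) (by fun_prop)
    (huv.mono fun W h => congrFun h (idx t)) (hWs t)

theorem isUnit_det_of_ae_mul_eq_mul {k m : ℕ} {P : Measure (Matrix (Fin k) (Fin m) ℝ)}
    (hcancel : ∀ u v : Fin m → ℝ, (∀ᵐ W ∂P, W *ᵥ u = W *ᵥ v) → u = v)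
    {What : Matrix (Fin k) (Fin m) ℝ → Matrix (Fin k) (Fin m) ℝ}
    {F Fhat : Matrix (Fin m) (Fin m) ℝ} (hF : IsUnit F.det)
    (hWF : ∀ᵐ W ∂P, What W * Fhat = W * F) : IsUnit Fhat.det := by
  rw [← isUnit_iff_isUnit_det, ← mulVec_injective_iff_isUnit]
  intro c c' hc
  refine mulVec_injective_iff_isUnit.mpr ((isUnit_iff_isUnit_det F).mpr hF) (hcancel _ _ ?_)
  filter_upwards [hWF] with W hW
  rw [mulVec_mulVec, mulVec_mulVec, ← hW, ← mulVec_mulVec, ← mulVec_mulVec, hc]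

theorem linear_identifiability_general
    {X Y : Type*} [MeasurableSpace Y] {k m : ℕ}
    (f fhat : X → Fin m → ℝ)
    (P : Measure (Matrix (Fin k) (Fin m) ℝ))
    (What : Matrix (Fin k) (Fin m) ℝ → Matrix (Fin k) (Fin m) ℝ)
    (ν : (Fin k → ℝ) → Measure Y)
    (klDiv : Measure Y → Measure Y → ℝ≥0∞)
    (hkl_id : ∀ η η' : Fin k → ℝ, klDiv (ν η) (ν η') = 0 → η = η')
    (hfit : ∀ᵐ W ∂P, ∀ x : X,
      klDiv (ν ((What W).mulVec (fhat x))) (ν (W.mulVec (f x))) = 0)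
    (hA4 : ∃ xs : Fin m → X, IsUnit (Matrix.of fun i t => f (xs t) i).det)
    (hA5 : ∃ (Ws : Fin m → Matrix (Fin k) (Fin m) ℝ) (idx : Fin m → Fin k),
      (∀ t, Ws t ∈ msupport P) ∧
      LinearIndependent ℝ fun t => Ws t (idx t)) :
    ∃ L : Matrix (Fin m) (Fin m) ℝ, IsUnit L.det ∧
      (∀ x : X, f x = L.mulVec (fhat x)) ∧
      (∀ᵐ W ∂P, What W = W * L) := by
  obtain ⟨xs, hF⟩ := hA4
  obtain ⟨Ws, idx, hWs, hli⟩ := hA5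
  have hcancel : ∀ u v : Fin m → ℝ, (∀ᵐ W ∂P, W *ᵥ u = W *ᵥ v) → u = v :=
    fun _ _ => eq_of_ae_mulVec_eq hWs hli
  have hfit_eq : ∀ᵐ W ∂P, ∀ x, What W *ᵥ fhat x = W *ᵥ f x :=
    hfit.mono fun W h x => hkl_id _ _ (h x)
  set F : Matrix (Fin m) (Fin m) ℝ := of fun i t => f (xs t) i
  set Fhat : Matrix (Fin m) (Fin m) ℝ := of fun i t => fhat (xs t) i
  have hWF : ∀ᵐ W ∂P, What W * Fhat = W * F :=
    hfit_eq.mono fun W h => by ext i t; exact congrFun (h (xs t)) i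
  have hFhat : IsUnit Fhat.det := isUnit_det_of_ae_mul_eq_mul hcancel hF hWF
  have hWhat : ∀ᵐ W ∂P, What W = W * (F * Fhat⁻¹) := hWF.mono fun W h => by
    rw [← Matrix.mul_assoc, ← h, Matrix.mul_assoc, mul_nonsing_inv _ hFhat, Matrix.mul_one]
  refine ⟨F * Fhat⁻¹, ?_, fun x => hcancel _ _ ?_, hWhat⟩
  · rw [det_mul]
    exact hF.mul (isUnit_nonsing_inv_det _ hFhat)
  · filter_upwards [hfit_eq, hWhat] with W hfitW hWhatW
    rw [mulVec_mulVec, ← hWhatW, hfitW x]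

/-- **Linear identifiability.**
Let `f, f̂ : X → ℝ^m`, let `P` be a Borel probability measure on `ℝ^{k×m}` with
topological support `𝒲 = msupport P`, let `Ŵ` assign to each task `W` an estimate
`Ŵ W`, and let `η ↦ ν η` be a KL-identifiable family of probability measures (`klDiv`
denotes the Kullback–Leibler divergence, valued in `ℝ≥0∞`, with `klDiv ρ ρ = 0`).
Assume the perfect-fit condition `klDiv (ν (Ŵ W ⬝ f̂ x)) (ν (W ⬝ f x)) = 0` for
`P`-a.e. `W` and every `x`, together with sufficient representation variability (A4) and
sufficient task variability (A5).  Then there is an invertible `L ∈ ℝ^{m×m}` with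
`f x = L (f̂ x)` for all `x` and `Ŵ W = W L` for `P`-a.e. `W`. -/
theorem linear_identifiability
    {X Y : Type*} [Nonempty X] [MeasurableSpace Y] {k m : ℕ}
    (f fhat : X → Fin m → ℝ)
    (P : Measure (Matrix (Fin k) (Fin m) ℝ)) [IsProbabilityMeasure P]
    (What : Matrix (Fin k) (Fin m) ℝ → Matrix (Fin k) (Fin m) ℝ)
    (ν : (Fin k → ℝ) → Measure Y) [∀ η, IsProbabilityMeasure (ν η)]
    (klDiv : Measure Y → Measure Y → ℝ≥0∞)
    (hkl_self : ∀ ρ : Measure Y, klDiv ρ ρ = 0)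
    (hkl_id : ∀ η η' : Fin k → ℝ, klDiv (ν η) (ν η') = 0 → η = η')
    (hfit : ∀ᵐ W ∂P, ∀ x : X,
      klDiv (ν ((What W).mulVec (fhat x))) (ν (W.mulVec (f x))) = 0)
    (hA4 : ∃ xs : Fin m → X, IsUnit (Matrix.of fun i t => f (xs t) i).det)
    (hA5 : ∃ (Ws : Fin m → Matrix (Fin k) (Fin m) ℝ) (idx : Fin m → Fin k),
      (∀ t, Ws t ∈ msupport P) ∧
      LinearIndependent ℝ fun t => Ws t (idx t)) :
    ∃ L : Matrix (Fin m) (Fin m) ℝ, IsUnit L.det ∧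
      (∀ x : X, f x = L.mulVec (fhat x)) ∧
      (∀ᵐ W ∂P, What W = W * L) :=
  linear_identifiability_general f fhat P What ν klDiv hkl_id hfit hA4 hA5
end

section
/- (Disentanglement via task sparsity.) Let X be a nonempty set, let f, f̂ : X → ℝ^m, let P be a Borel probability measure on ℝ^{k×m} with topological support 𝒲, let Ŵ : 𝒲 → ℝ^{k×m} be measurable, and let η ↦ ν_η (η ∈ ℝ^k) be a KL-identifiable family of probability measures. Suppose that for P-almost every W ∈ 𝒲 and every x ∈ X, klDiv(ν_{Ŵ(W) f̂(x)}, ν_{W f(x)}) = 0. Assume: (A4) there exist x^(1),…,x^(m) ∈ X such that [f(x^(1)) ⋯ f(x^(m))] ∈ ℝ^{m×m} is invertible; (A5) there exist W^(1),…,W^(m) ∈ 𝒲 and indices i_1,…,i_m ∈ {1,…,k} with rows W^(1)_{i_1,:},…,W^(m)_{i_m,:} linearly independent; (A6) for every S ⊆ {1,…,m} with P[colsupp(W) = S] > 0 and every nonzero a ∈ ℝ^m with supp(a) ⊆ S, P[{W : W a = 0} ∩ {colsupp(W) = S}] = 0; (A7) for every j ∈ {1,…,m}, the union of all sets S with P[colsupp(W)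 = S] > 0 and j ∉ S equals {1,…,m} \ {j}. If moreover ∫ ‖Ŵ(W)‖_{2,0} dP(W) ≤ ∫ ‖W‖_{2,0} dP(W), then f̂ is disentangled with respect to f: there exist a permutation matrix Π ∈ ℝ^{m×m} and an invertible diagonal matrix D ∈ ℝ^{m×m} such that f̂(x) = D Π f(x) for all x ∈ X. -/
/-!
Identifiability turns perfect fit into `Ŵ(W) f̂(x) = W f(x)` for `P`-a.e. `W`. A closed condition
that holds `P`-a.e. holds on the support of `P`, so (A4) and (A5) produce an invertible `L` with
`f = L f̂` and `Ŵ(W) = W L` a.e.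

Call a set `S` of rows tight if the row supports of `L` indexed by `S` cover only `|S|` columns.
The column support of `W L` is covered by the row supports of `L` indexed by the column support of
`W`, with equality a.e. by (A6). Invertibility of `L` is Hall's condition for the row supports, so
`‖W L‖_{2,0} ≥ ‖W‖_{2,0}` a.e., and the sparsity bound forces equality: every column support of
positive probability is tight. Tight sets are closed under unions, so by (A7) every `{j}ᶜ` is
tight, which leaves each row of `L` a single nonzero entry, in permuted positions. Hence
`L⁻¹ = D Π`.
-/

open MeasureTheory
open scoped ENNReal BigOperators

/-- The column support of a matrix: indices of its nonzero columns. -/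
def colSupp {k m : ℕ} (W : Matrix (Fin k) (Fin m) ℝ) : Set (Fin m) :=
  {j | ∃ i, W i j ≠ 0}

/-- The column sparsity `‖A‖_{2,0}`: the number of nonzero columns. -/
noncomputable def colSparsity {k m : ℕ} (W : Matrix (Fin k) (Fin m) ℝ) : ℕ :=
  (colSupp W).ncard

/-- A matrix is a permutation matrix if it is obtained from a permutation `σ`
by putting a `1` in entry `(i, σ i)` and `0` elsewhere. -/
def IsPermMatrix {m : ℕ} (P : Matrix (Fin m) (Fin m) ℝ) : Prop :=
  ∃ σ : Equiv.Perm (Fin m), P = Matrix.of fun i j => if σ i = j then (1 : ℝ) else 0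

open scoped Matrix

section Hall

variable {ι : Type*} [Finite ι] {R : ι → Set ι}

theorem ncard_biUnion_union_eq_of_eq (hall : ∀ T : Set ι, T.ncard ≤ (⋃ i ∈ T, R i).ncard)
    {A B : Set ι} (hA : (⋃ i ∈ A, R i).ncard = A.ncard) (hB : (⋃ i ∈ B, R i).ncard = B.ncard) :
    (⋃ i ∈ A ∪ B, R i).ncard = (A ∪ B).ncard := by
  have hinter : (⋃ i ∈ A ∩ B, R i) ⊆ (⋃ i ∈ A, R i) ∩ ⋃ i ∈ B, R i :=
    Set.subset_inter (Set.biUnion_subset_biUnion_left Set.inter_subset_left)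
      (Set.biUnion_subset_biUnion_left Set.inter_subset_right)
  have h₁ := Set.ncard_union_add_ncard_inter (⋃ i ∈ A, R i) (⋃ i ∈ B, R i)
  have h₂ := Set.ncard_union_add_ncard_inter A B
  have h₃ := Set.ncard_le_ncard hinter
  have h₄ := hall (A ∩ B)
  have h₅ := hall (A ∪ B)
  -- With `N T = ⋃ i ∈ T, R i`:
  -- `|N(A ∪ B)| + |A ∩ B| ≤ |N(A ∪ B)| + |N A ∩ N B| = |A| + |B| = |A ∪ B| + |A ∩ B|`.
  rw [Set.biUnion_union] at h₅ ⊢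
  omega

theorem ncard_biUnion_sUnion_eq_of_eq (hall : ∀ T : Set ι, T.ncard ≤ (⋃ i ∈ T, R i).ncard)
    {𝒯 : Set (Set ι)} (h𝒯 : ∀ S ∈ 𝒯, (⋃ i ∈ S, R i).ncard = S.ncard) :
    (⋃ i ∈ ⋃₀ 𝒯, R i).ncard = (⋃₀ 𝒯).ncard := by
  induction 𝒯, Set.toFinite 𝒯 using Set.Finite.induction_on with
  | empty => simp
  | insert _ _ ih =>
    rw [Set.sUnion_insert]
    exact ncard_biUnion_union_eq_of_eq hall (h𝒯 _ (Set.mem_insert _ _))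
      (ih fun S hS => h𝒯 S (Set.mem_insert_of_mem _ hS))

theorem exists_perm_eq_singleton_of_tight_cover
    (hall : ∀ T : Set ι, T.ncard ≤ (⋃ i ∈ T, R i).ncard) {𝒮 : Set (Set ι)}
    (h𝒮 : ∀ S ∈ 𝒮, (⋃ i ∈ S, R i).ncard = S.ncard)
    (hcover : ∀ j, (⋃ S ∈ {S | S ∈ 𝒮 ∧ j ∉ S}, S) = ({j}ᶜ : Set ι)) :
    ∃ σ : Equiv.Perm ι, ∀ i, R i = {σ i} := by
  have huniv : (⋃ i ∈ Set.univ, R i) = Set.univ :=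
    Set.eq_of_subset_of_ncard_le (Set.subset_univ _) (hall Set.univ)
  -- `{j}ᶜ` is tight and `univ` reaches every column, so `R j` has a column no other row reaches.
  have hprivate (j : ι) : ∃ c ∈ R j, ∀ i, i ≠ j → c ∉ R i := by
    have htight : (⋃ i ∈ ({j}ᶜ : Set ι), R i).ncard = ({j}ᶜ : Set ι).ncard := by
      rw [← hcover j, ← Set.sUnion_eq_biUnion]
      exact ncard_biUnion_sUnion_eq_of_eq hall fun S hS => h𝒮 S hS.1
    obtain ⟨c, hc⟩ : ∃ c, c ∉ ⋃ i ∈ ({j}ᶜ : Set ι), R i := by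
      by_contra! h
      have := Set.ncard_lt_card (Set.compl_ne_univ.2 (Set.singleton_nonempty j))
      rw [← htight, Set.eq_univ_of_forall h, Set.ncard_univ] at this
      exact this.false
    obtain ⟨i, -, hci⟩ := Set.mem_iUnion₂.1 (huniv.symm ▸ Set.mem_univ c)
    have hij : i = j := not_not.1 fun hij => hc (Set.mem_biUnion hij hci)
    exact ⟨c, hij ▸ hci, fun i hij hci => hc (Set.mem_biUnion hij hci)⟩
  choose c hcR hcnot using hprivate
  have hc : Function.Bijective c := Finite.injective_iff_bijective.1 fun j j' hjj' =>
    not_not.1 fun hne => hcnot j' j hne (hjj' ▸ hcR j)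
  refine ⟨Equiv.ofBijective c hc, fun i => Set.Subset.antisymm (fun d hd => ?_) ?_⟩
  · obtain ⟨i', rfl⟩ := hc.2 d
    rcases eq_or_ne i i' with rfl | hne
    · rfl
    · exact absurd hd (hcnot i' i hne)
  · exact Set.singleton_subset_iff.2 (hcR i)

end Hall

theorem ncard_le_ncard_biUnion_of_isUnit_det {K n : Type*} [Field K] [Fintype n] [DecidableEq n]
    {L : Matrix n n K} (hL : IsUnit L.det) (T : Set n) :
    T.ncard ≤ (⋃ i ∈ T, {j | L i j ≠ 0}).ncard := by
  classical
  set U := ⋃ i ∈ T, {j | L i j ≠ 0}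
  have hrows : LinearIndependent K fun i : T => L i :=
    (Matrix.linearIndependent_rows_iff_isUnit.2 ((Matrix.isUnit_iff_isUnit_det L).2 hL)).comp
      _ Subtype.val_injective
  have hrowsU : LinearIndependent K fun (i : T) (j : U) => L i j := by
    refine Fintype.linearIndependent_iff.2 fun g hg => Fintype.linearIndependent_iff.1 hrows g ?_
    ext j
    by_cases hj : j ∈ U
    · simpa using congrFun hg ⟨j, hj⟩
    · have hzero (i : T) : L i j = 0 := not_not.1 fun h => hj (Set.mem_biUnion i.2 h)
      simp [hzero]
  have := hrowsU.fintype_card_le_finrank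
  rwa [Module.finrank_fintype_fun_eq_card, ← Nat.card_eq_fintype_card, ← Nat.card_eq_fintype_card,
    Nat.card_coe_set_eq, Nat.card_coe_set_eq] at this

theorem msupport_subset_of_ae_mem {α : Type*} [TopologicalSpace α] [MeasurableSpace α]
    {P : Measure α} {C : Set α} (hC : IsClosed C) (h : ∀ᵐ x ∂P, x ∈ C) : msupport P ⊆ C :=
  fun _ hx => not_not.1 fun hxC => (hx Cᶜ hC.isOpen_compl hxC).ne' (ae_iff.1 h)

theorem ae_eq_of_ae_le_of_lintegral_natCast_le {α : Type*} [MeasurableSpace α] {μ : Measure α}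
    [IsFiniteMeasure μ] {f g : α → ℕ} (C : ℕ) (hf : ∀ x, f x ≤ C) (hg : Measurable g)
    (hfg : ∀ᵐ x ∂μ, f x ≤ g x) (h : ∫⁻ x, (g x : ℝ≥0∞) ∂μ ≤ ∫⁻ x, (f x : ℝ≥0∞) ∂μ) :
    ∀ᵐ x ∂μ, g x = f x := by
  have hfin : ∫⁻ x, (f x : ℝ≥0∞) ∂μ ≠ ∞ :=
    (IsFiniteMeasure.lintegral_lt_top_of_bounded_to_ennreal μ
      ⟨C, fun x => by exact_mod_cast hf x⟩).ne
  have hg' : Measurable fun x => (g x : ℝ≥0∞) := measurable_from_nat.comp hg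
  filter_upwards [ae_eq_of_ae_le_of_lintegral_le (g := fun x => (g x : ℝ≥0∞))
    (hfg.mono fun x hx => Nat.cast_le.2 hx) hfin hg'.aemeasurable h] with x hx
  exact_mod_cast hx.symm

section ColumnSupport

variable {k m n : ℕ}

theorem measurable_colSupp : Measurable (colSupp : Matrix (Fin k) (Fin m) ℝ → Set (Fin m)) := by
  refine measurable_pi_iff.2 fun j => Measurable.exists fun i => ?_
  exact measurableSet_setOfPred.1
    ((continuous_id.matrix_elem i j).measurable (measurableSet_singleton 0).compl)

theorem measurable_colSparsity :
    Measurable (colSparsity : Matrix (Fin k) (Fin m) ℝ → ℕ) :=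
  (measurable_of_finite Set.ncard).comp measurable_colSupp

theorem colSparsity_le (W : Matrix (Fin k) (Fin m) ℝ) : colSparsity W ≤ m := by
  simpa [colSparsity] using Set.ncard_le_card (colSupp W)

theorem colSupp_mul_subset (W : Matrix (Fin k) (Fin m) ℝ) (L : Matrix (Fin m) (Fin n) ℝ) :
    colSupp (W * L) ⊆ ⋃ i ∈ colSupp W, {j | L i j ≠ 0} := by
  rintro j ⟨r, hr⟩
  rw [Matrix.mul_apply] at hr
  obtain ⟨c, -, hc⟩ := Finset.exists_ne_zero_of_sum_ne_zero hr
  exact Set.mem_biUnion (⟨r, left_ne_zero_of_mul hc⟩ : c ∈ colSupp W) (right_ne_zero_of_mul hc)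

theorem mulVec_indicator_of_colSupp_subset {W : Matrix (Fin k) (Fin m) ℝ} {S : Set (Fin m)}
    (hW : colSupp W ⊆ S) (v : Fin m → ℝ) : W *ᵥ S.indicator v = W *ᵥ v := by
  ext r
  simp only [Matrix.mulVec, dotProduct]
  refine Finset.sum_congr rfl fun c _ => ?_
  by_cases hc : c ∈ S
  · rw [Set.indicator_of_mem hc]
  · have : W r c = 0 := not_not.1 fun h => hc (hW ⟨r, h⟩)
    simp [this]

theorem eq_zero_of_ae_mulVec_eq_zero {P : Measure (Matrix (Fin k) (Fin m) ℝ)}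
    {Ws : Fin m → Matrix (Fin k) (Fin m) ℝ} {idx : Fin m → Fin k}
    (hsupp : ∀ t, Ws t ∈ msupport P) (hli : LinearIndependent ℝ fun t => Ws t (idx t))
    {v : Fin m → ℝ} (hv : ∀ᵐ W ∂P, W *ᵥ v = 0) : v = 0 := by
  have hclosed : IsClosed {W : Matrix (Fin k) (Fin m) ℝ | W *ᵥ v = 0} :=
    isClosed_eq (continuous_id.matrix_mulVec continuous_const) continuous_const
  have hWs (t : Fin m) : Ws t *ᵥ v = 0 := msupport_subset_of_ae_mem hclosed hv (hsupp t)
  have hN : IsUnit (Matrix.of fun t => Ws t (idx t)) :=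
    Matrix.linearIndependent_rows_iff_isUnit.1 hli
  refine Matrix.mulVec_injective_iff_isUnit.2 hN ?_
  rw [Matrix.mulVec_zero]
  ext t
  exact congrFun (hWs t) (idx t)

theorem ae_mem_colSupp_mul_of_colSupp_eq (P : Measure (Matrix (Fin k) (Fin m) ℝ))
    (hA6 : ∀ S : Set (Fin m), 0 < P {W | colSupp W = S} →
      ∀ a : Fin m → ℝ, a ≠ 0 → {j | a j ≠ 0} ⊆ S →
        P ({W | W.mulVec a = 0} ∩ {W | colSupp W = S}) = 0)
    (L : Matrix (Fin m) (Fin n) ℝ) (S : Set (Fin m)) (j : Fin n) :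
    ∀ᵐ W ∂P, colSupp W = S → j ∈ ⋃ i ∈ S, {j | L i j ≠ 0} → j ∈ colSupp (W * L) := by
  rcases eq_or_ne (P {W | colSupp W = S}) 0 with hS | hS
  · exact (measure_eq_zero_iff_ae_notMem.1 hS).mono fun W hW hWS => absurd hWS hW
  by_cases hj : j ∈ ⋃ i ∈ S, {j | L i j ≠ 0}
  swap
  · exact ae_of_all _ fun _ _ h => absurd h hj
  obtain ⟨i, hiS, hij⟩ := Set.mem_iUnion₂.1 hj
  set a := S.indicator fun c => L c j
  have ha : a ≠ 0 := fun h => hij (by simpa [a, hiS] using congrFun h i)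
  have hsupp : {c | a c ≠ 0} ⊆ S := fun c hc =>
    not_not.1 fun hcS => hc (Set.indicator_of_notMem hcS _)
  filter_upwards [measure_eq_zero_iff_ae_notMem.1 (hA6 S hS.bot_lt a ha hsupp)] with W hW hWS _
  have hcol : W *ᵥ a = fun r => (W * L) r j := by
    rw [mulVec_indicator_of_colSupp_subset hWS.le]
    rfl
  obtain ⟨r, hr⟩ := Function.ne_iff.1 fun h => hW ⟨h, hWS⟩
  exact ⟨r, by rwa [hcol] at hr⟩

theorem ae_colSupp_mul_eq (P : Measure (Matrix (Fin k) (Fin m) ℝ))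
    (hA6 : ∀ S : Set (Fin m), 0 < P {W | colSupp W = S} →
      ∀ a : Fin m → ℝ, a ≠ 0 → {j | a j ≠ 0} ⊆ S →
        P ({W | W.mulVec a = 0} ∩ {W | colSupp W = S}) = 0)
    (L : Matrix (Fin m) (Fin n) ℝ) :
    ∀ᵐ W ∂P, colSupp (W * L) = ⋃ i ∈ colSupp W, {j | L i j ≠ 0} := by
  filter_upwards [ae_all_iff.2 fun S => ae_all_iff.2 (ae_mem_colSupp_mul_of_colSupp_eq P hA6 L S)]
    with W hW
  exact (colSupp_mul_subset W L).antisymm fun j hj => hW _ j rfl hj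

end ColumnSupport

section Identification

variable {k m : ℕ}

theorem ncard_biUnion_eq_of_measure_colSupp_pos (P : Measure (Matrix (Fin k) (Fin m) ℝ))
    [IsFiniteMeasure P] {What : Matrix (Fin k) (Fin m) ℝ → Matrix (Fin k) (Fin m) ℝ}
    (hWmeas : Measurable What) {L : Matrix (Fin m) (Fin m) ℝ} (hL : IsUnit L.det)
    (hWhat : ∀ᵐ W ∂P, What W = W * L)
    (hA6 : ∀ S : Set (Fin m), 0 < P {W | colSupp W = S} →
      ∀ a : Fin m → ℝ, a ≠ 0 → {j | a j ≠ 0} ⊆ S →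
        P ({W | W.mulVec a = 0} ∩ {W | colSupp W = S}) = 0)
    (hsparse : (∫⁻ W, (colSparsity (What W) : ℝ≥0∞) ∂P) ≤
      ∫⁻ W, (colSparsity W : ℝ≥0∞) ∂P)
    {S : Set (Fin m)} (hS : 0 < P {W | colSupp W = S}) :
    (⋃ i ∈ S, {j | L i j ≠ 0}).ncard = S.ncard := by
  have hsupp := ae_colSupp_mul_eq P hA6 L
  have hle : ∀ᵐ W ∂P, colSparsity W ≤ colSparsity (What W) := by
    filter_upwards [hsupp, hWhat] with W hWL hW
    rw [colSparsity, colSparsity, hW, hWL]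
    exact ncard_le_ncard_biUnion_of_isUnit_det hL _
  have heq := ae_eq_of_ae_le_of_lintegral_natCast_le m colSparsity_le
    (measurable_colSparsity.comp hWmeas) hle hsparse
  obtain ⟨W, hWS, hWL, hW, hWsp⟩ := Measure.exists_mem_of_measure_ne_zero_of_ae hS.ne'
    (ae_restrict_of_ae (hsupp.and (hWhat.and heq)))
  calc (⋃ i ∈ S, {j | L i j ≠ 0}).ncard = colSparsity (What W) := by
        rw [colSparsity, hW, hWL, hWS.out]
    _ = colSparsity W := hWsp
    _ = S.ncard := by rw [colSparsity, hWS.out]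

theorem isUnit_det_of_ae_mul_eq {P : Measure (Matrix (Fin k) (Fin m) ℝ)}
    {Ws : Fin m → Matrix (Fin k) (Fin m) ℝ} {idx : Fin m → Fin k}
    (hsupp : ∀ t, Ws t ∈ msupport P) (hli : LinearIndependent ℝ fun t => Ws t (idx t))
    {What : Matrix (Fin k) (Fin m) ℝ → Matrix (Fin k) (Fin m) ℝ}
    {F Fhat : Matrix (Fin m) (Fin m) ℝ} (hF : IsUnit F.det)
    (h : ∀ᵐ W ∂P, What W * Fhat = W * F) : IsUnit Fhat.det := by
  refine isUnit_iff_ne_zero.2 fun h0 => ?_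
  obtain ⟨v, hv, hFhatv⟩ := Matrix.exists_mulVec_eq_zero_iff.2 h0
  have hFv : F *ᵥ v = 0 := eq_zero_of_ae_mulVec_eq_zero hsupp hli <| h.mono fun W hW => by
    rw [Matrix.mulVec_mulVec, ← hW, ← Matrix.mulVec_mulVec, hFhatv, Matrix.mulVec_zero]
  exact hF.ne_zero (Matrix.exists_mulVec_eq_zero_iff.1 ⟨v, hv, hFv⟩)

theorem exists_ae_eq_mul_of_ae_mulVec_eq {X : Type*} {P : Measure (Matrix (Fin k) (Fin m) ℝ)}
    {f fhat : X → Fin m → ℝ} {What : Matrix (Fin k) (Fin m) ℝ → Matrix (Fin k) (Fin m) ℝ}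
    (hfit : ∀ᵐ W ∂P, ∀ x, What W *ᵥ fhat x = W *ᵥ f x)
    (hA4 : ∃ xs : Fin m → X, IsUnit (Matrix.of fun i t => f (xs t) i).det)
    {Ws : Fin m → Matrix (Fin k) (Fin m) ℝ} {idx : Fin m → Fin k}
    (hsupp : ∀ t, Ws t ∈ msupport P) (hli : LinearIndependent ℝ fun t => Ws t (idx t)) :
    ∃ L : Matrix (Fin m) (Fin m) ℝ,
      IsUnit L.det ∧ (∀ x, L *ᵥ fhat x = f x) ∧ ∀ᵐ W ∂P, What W = W * L := by
  obtain ⟨xs, hF⟩ := hA4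
  set F : Matrix (Fin m) (Fin m) ℝ := Matrix.of fun i t => f (xs t) i
  set Fhat : Matrix (Fin m) (Fin m) ℝ := Matrix.of fun i t => fhat (xs t) i
  have hmat : ∀ᵐ W ∂P, What W * Fhat = W * F := hfit.mono fun W hW => by
    ext i t
    exact congrFun (hW (xs t)) i
  have hFhat := isUnit_det_of_ae_mul_eq hsupp hli hF hmat
  have hWhat : ∀ᵐ W ∂P, What W = W * (F * Fhat⁻¹) := hmat.mono fun W hW => by
    rw [← Matrix.mul_assoc, ← hW]
    exact (Matrix.mul_nonsing_inv_cancel_right _ _ hFhat).symm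
  refine ⟨F * Fhat⁻¹, ?_, fun x => ?_, hWhat⟩
  · rw [Matrix.det_mul]
    exact hF.mul (Matrix.isUnit_nonsing_inv_det _ hFhat)
  · refine sub_eq_zero.1 (eq_zero_of_ae_mulVec_eq_zero hsupp hli ?_)
    filter_upwards [hfit, hWhat] with W hW hWL
    rw [Matrix.mulVec_sub, Matrix.mulVec_mulVec, ← hWL, hW x, sub_self]

end Identification

theorem exists_isPermMatrix_isDiag_mul_mul_eq_one {m : ℕ} {L : Matrix (Fin m) (Fin m) ℝ}
    {σ : Equiv.Perm (Fin m)} (hσ : ∀ i, {j | L i j ≠ 0} = {σ i}) :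
    ∃ Pmat D : Matrix (Fin m) (Fin m) ℝ,
      IsPermMatrix Pmat ∧ D.IsDiag ∧ IsUnit D.det ∧ D * Pmat * L = 1 := by
  have hL (i j) : L i j ≠ 0 ↔ j = σ i := Set.ext_iff.1 (hσ i) j
  have hd (i) : L (σ.symm i) i ≠ 0 := (hL _ _).2 (σ.apply_symm_apply i).symm
  refine ⟨Matrix.of fun i j => if σ.symm i = j then 1 else 0,
    Matrix.diagonal fun i => (L (σ.symm i) i)⁻¹, ⟨σ.symm, rfl⟩, Matrix.isDiag_diagonal _, ?_, ?_⟩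
  · rw [Matrix.det_diagonal]
    exact isUnit_iff_ne_zero.2 (Finset.prod_ne_zero_iff.2 fun i _ => inv_ne_zero (hd i))
  · ext i j
    rw [Matrix.mul_assoc, Matrix.diagonal_mul, Matrix.mul_apply]
    simp only [Matrix.of_apply, ite_mul, one_mul, zero_mul, Finset.sum_ite_eq, Finset.mem_univ,
      if_true]
    rcases eq_or_ne i j with rfl | hij
    · rw [inv_mul_cancel₀ (hd i), Matrix.one_apply_eq]
    · have : L (σ.symm i) j = 0 :=
        not_not.1 fun h => hij (((hL _ _).1 h).trans (σ.apply_symm_apply i)).symm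
      rw [this, mul_zero, Matrix.one_apply_ne hij]

theorem disentanglement_via_task_sparsity_general
    {X Y : Type*} [MeasurableSpace Y] {k m : ℕ}
    (f fhat : X → Fin m → ℝ)
    (P : Measure (Matrix (Fin k) (Fin m) ℝ)) [IsProbabilityMeasure P]
    (What : Matrix (Fin k) (Fin m) ℝ → Matrix (Fin k) (Fin m) ℝ)
    (hWmeas : Measurable What)
    (ν : (Fin k → ℝ) → Measure Y)
    (klDiv : Measure Y → Measure Y → ℝ≥0∞)
    (hkl_id : ∀ η η' : Fin k → ℝ, klDiv (ν η) (ν η') = 0 → η = η')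
    (hfit : ∀ᵐ W ∂P, ∀ x : X,
      klDiv (ν ((What W).mulVec (fhat x))) (ν (W.mulVec (f x))) = 0)
    (hA4 : ∃ xs : Fin m → X, IsUnit (Matrix.of fun i t => f (xs t) i).det)
    (hA5 : ∃ (Ws : Fin m → Matrix (Fin k) (Fin m) ℝ) (idx : Fin m → Fin k),
      (∀ t, Ws t ∈ msupport P) ∧
      LinearIndependent ℝ fun t => Ws t (idx t))
    (hA6 : ∀ S : Set (Fin m), 0 < P {W | colSupp W = S} →
      ∀ a : Fin m → ℝ, a ≠ 0 → {j | a j ≠ 0} ⊆ S →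
        P ({W | W.mulVec a = 0} ∩ {W | colSupp W = S}) = 0)
    (hA7 : ∀ j : Fin m,
      (⋃ S ∈ {S : Set (Fin m) | 0 < P {W | colSupp W = S} ∧ j ∉ S}, S) =
        ({j}ᶜ : Set (Fin m)))
    (hsparse : (∫⁻ W, (colSparsity (What W) : ℝ≥0∞) ∂P) ≤
      ∫⁻ W, (colSparsity W : ℝ≥0∞) ∂P) :
    ∃ (Pmat D : Matrix (Fin m) (Fin m) ℝ),
      IsPermMatrix Pmat ∧ D.IsDiag ∧ IsUnit D.det ∧
      ∀ x : X, fhat x = (D * Pmat).mulVec (f x) := by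
  obtain ⟨Ws, idx, hsupp, hli⟩ := hA5
  have hfit' : ∀ᵐ W ∂P, ∀ x, What W *ᵥ fhat x = W *ᵥ f x :=
    hfit.mono fun W hW x => hkl_id _ _ (hW x)
  obtain ⟨L, hL, hLf, hWhat⟩ := exists_ae_eq_mul_of_ae_mulVec_eq hfit' hA4 hsupp hli
  obtain ⟨σ, hσ⟩ := exists_perm_eq_singleton_of_tight_cover
    (ncard_le_ncard_biUnion_of_isUnit_det hL)
    (fun S hS => ncard_biUnion_eq_of_measure_colSupp_pos P hWmeas hL hWhat hA6 hsparse hS) hA7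
  obtain ⟨Pmat, D, hPmat, hD, hDdet, hDPL⟩ := exists_isPermMatrix_isDiag_mul_mul_eq_one hσ
  refine ⟨Pmat, D, hPmat, hD, hDdet, fun x => ?_⟩
  rw [← hLf x, Matrix.mulVec_mulVec, hDPL, Matrix.one_mulVec]

/-- **Disentanglement via task sparsity.**
Under perfect fit (`P`-a.e. task, every `x`), sufficient representation variability
(A4), sufficient task variability (A5), intra-support sufficient task variability (A6),
sufficient support variability (A7), and the expected-sparsity bound
`∫ ‖Ŵ W‖_{2,0} dP ≤ ∫ ‖W‖_{2,0} dP`, the learned representation `f̂` is disentangled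
w.r.t. `f`: there are a permutation matrix `Π` and an invertible diagonal matrix `D`
with `f̂ x = (D Π) (f x)` for all `x`. -/
theorem disentanglement_via_task_sparsity
    {X Y : Type*} [Nonempty X] [MeasurableSpace Y] {k m : ℕ}
    (f fhat : X → Fin m → ℝ)
    (P : Measure (Matrix (Fin k) (Fin m) ℝ)) [IsProbabilityMeasure P]
    (What : Matrix (Fin k) (Fin m) ℝ → Matrix (Fin k) (Fin m) ℝ)
    (hWmeas : Measurable What)
    (ν : (Fin k → ℝ) → Measure Y) [∀ η, IsProbabilityMeasure (ν η)]
    (klDiv : Measure Y → Measure Y → ℝ≥0∞)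
    (hkl_self : ∀ ρ : Measure Y, klDiv ρ ρ = 0)
    (hkl_id : ∀ η η' : Fin k → ℝ, klDiv (ν η) (ν η') = 0 → η = η')
    (hfit : ∀ᵐ W ∂P, ∀ x : X,
      klDiv (ν ((What W).mulVec (fhat x))) (ν (W.mulVec (f x))) = 0)
    (hA4 : ∃ xs : Fin m → X, IsUnit (Matrix.of fun i t => f (xs t) i).det)
    (hA5 : ∃ (Ws : Fin m → Matrix (Fin k) (Fin m) ℝ) (idx : Fin m → Fin k),
      (∀ t, Ws t ∈ msupport P) ∧
      LinearIndependent ℝ fun t => Ws t (idx t))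
    (hA6 : ∀ S : Set (Fin m), 0 < P {W | colSupp W = S} →
      ∀ a : Fin m → ℝ, a ≠ 0 → {j | a j ≠ 0} ⊆ S →
        P ({W | W.mulVec a = 0} ∩ {W | colSupp W = S}) = 0)
    (hA7 : ∀ j : Fin m,
      (⋃ S ∈ {S : Set (Fin m) | 0 < P {W | colSupp W = S} ∧ j ∉ S}, S) =
        ({j}ᶜ : Set (Fin m)))
    (hsparse : (∫⁻ W, (colSparsity (What W) : ℝ≥0∞) ∂P) ≤
      ∫⁻ W, (colSparsity W : ℝ≥0∞) ∂P) :
    ∃ (Pmat D : Matrix (Fin m) (Fin m) ℝ),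
      IsPermMatrix Pmat ∧ D.IsDiag ∧ IsUnit D.det ∧
      ∀ x : X, fhat x = (D * Pmat).mulVec (f x) :=
  disentanglement_via_task_sparsity_general f fhat P What hWmeas ν klDiv hkl_id hfit hA4 hA5 hA6 hA7
    hsparse
end
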